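/- Let C = {0, 1, τ, τ², …} be the free commutative monoid on one generator with zero adjoined, and give spec_c C the topology generated by the sets D(a,b) = {E : (a,b) ∉ E}. Then the closed points of spec_c C are exactly the two congruences τ ∼ 0 and τ ∼ 1. -/

import Mathlib

/-- A congruence `E` on a commutative monoid with zero is prime if `1 ≁ 0` and
`a·f ∼ b·f` implies `a ∼ b` or `f ∼ 0`. -/
def IsPrimeCon {A : Type*} [CommMonoidWithZero A] (E : Con A) : Prop :=
  ¬ E 1 0 ∧ ∀ a b f : A, E (a * f) (b * f) → E a b ∨ E f 0

/-- The congruence spectrum: the set of prime congruences on `A`. -/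
def SpecC (A : Type*) [CommMonoidWithZero A] : Type _ := {E : Con A // IsPrimeCon E}

/-- The topology on `spec_c A` generated by the subbasic open sets
`D(a,b) = {E : (a,b) ∉ E}`. -/
instance SpecC.instTopologicalSpace (A : Type*) [CommMonoidWithZero A] :
    TopologicalSpace (SpecC A) :=
  TopologicalSpace.generateFrom
    {U | ∃ a b : A, U = {E : SpecC A | ¬ E.1 a b}}

/-- The free commutative monoid on one generator `τ` with an absorbing zero adjoined:
`C = {0, 1, τ, τ², …}`. -/
abbrev FreeMonoidZero : Type := WithZero (Multiplicative ℕ)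

/-- The generator `τ`. -/
def tau : FreeMonoidZero := ((Multiplicative.ofAdd 1 : Multiplicative ℕ) : FreeMonoidZero)

/-- `E` is the congruence `τ ∼ 0`, with the two classes `{0, τ, τ², …}` and `{1}`. -/
def IsTauZeroCon (E : Con FreeMonoidZero) : Prop :=
  ∀ x y, E x y ↔ ((x = 1 ∧ y = 1) ∨ (x ≠ 1 ∧ y ≠ 1))

/-- `E` is the congruence `τⁿ ∼ 1`, given by `τ^a ∼ τ^b ↔ n ∣ a - b`. -/
def IsTauNCon (n : ℕ) (E : Con FreeMonoidZero) : Prop :=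
  ∀ x y, E x y ↔ ((x = 0 ∧ y = 0) ∨
    ∃ a b : ℕ, x = tau ^ a ∧ y = tau ^ b ∧ (n : ℤ) ∣ (a : ℤ) - (b : ℤ))

/-!
The closure of a point `E` of `spec_c` consists of the prime congruences containing `E`, so the
closed points are the maximal prime congruences. A prime congruence with `τ ∼ 0` identifies
everything but `1` with `0`, so it is `τ ∼ 0`. A prime congruence with `τ ≁ 0` never relates `τⁿ`
to `0`, so it is contained in `τ ∼ 1`, whose classes are `{0}` and `C \ {0}`. Both are maximal: a
prime congruence containing `τ ∼ 1` and relating `τ` to `0` would relate `1` to `0`.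
-/

namespace SpecC

variable {A : Type*} [CommMonoidWithZero A]

theorem isOpen_setOf_not_rel (a b : A) : IsOpen {E : SpecC A | ¬ E.1 a b} :=
  TopologicalSpace.isOpen_generateFrom_of_mem ⟨a, b, rfl⟩

theorem specializes_iff {x y : SpecC A} : x ⤳ y ↔ x.1 ≤ y.1 := by
  rw [Specializes, ← Filter.tendsto_id', TopologicalSpace.tendsto_nhds_generateFrom_iff]
  refine ⟨fun h a b hx => by_contra fun hy => mem_of_mem_nhds (h _ ⟨a, b, rfl⟩ hy) hx, ?_⟩
  rintro h _ ⟨a, b, rfl⟩ hy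
  exact (isOpen_setOf_not_rel a b).mem_nhds fun hx => hy (h hx)

theorem isClosed_singleton_iff (x : SpecC A) :
    IsClosed ({x} : Set (SpecC A)) ↔ ∀ y : SpecC A, x.1 ≤ y.1 → y = x := by
  simp only [← closure_subset_iff_isClosed, Set.subset_def, ← specializes_iff_mem_closure,
    specializes_iff, Set.mem_singleton_iff]

end SpecC

theorem IsPrimeCon.rel_zero_of_rel_pow_zero {M : Type*} [CommMonoidWithZero M] {E : Con M}
    (hE : IsPrimeCon E) {a : M} {n : ℕ} (h : E (a ^ n) 0) : E a 0 := by
  induction n with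
  | zero => exact absurd (by simpa using h) hE.1
  | succ n ih =>
    rw [pow_succ, ← zero_mul a] at h
    exact (hE.2 _ _ _ h).elim ih id

def nonzeroCon (M : Type*) [MonoidWithZero M] [NoZeroDivisors M] : Con M where
  toSetoid := Setoid.ker (· = 0)
  mul' {a b c d} hab hcd := by
    simp only [Setoid.ker_def, eq_iff_iff, mul_eq_zero] at *
    rw [hab, hcd]

theorem nonzeroCon_iff {M : Type*} [MonoidWithZero M] [NoZeroDivisors M] {a b : M} :
    nonzeroCon M a b ↔ (a = 0 ↔ b = 0) :=
  Setoid.ker_def.trans eq_iff_iff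

theorem isPrimeCon_nonzeroCon (M : Type*) [CommMonoidWithZero M] [NoZeroDivisors M]
    [Nontrivial M] : IsPrimeCon (nonzeroCon M) := by
  refine ⟨by simp [nonzeroCon_iff], fun a b f h => ?_⟩
  by_cases hf : f = 0
  · exact Or.inr (nonzeroCon_iff.2 (iff_of_true hf rfl))
  · simpa [nonzeroCon_iff, hf] using h

namespace FreeMonoidZero

theorem tau_pow (n : ℕ) :
    tau ^ n = ((Multiplicative.ofAdd n : Multiplicative ℕ) : FreeMonoidZero) := by
  rw [tau, ← WithZero.coe_pow, ← ofAdd_nsmul, smul_eq_mul, mul_one]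

theorem tau_ne_one : tau ≠ 1 := by decide

theorem tau_ne_zero : tau ≠ 0 :=
  WithZero.coe_ne_zero

theorem ne_zero_iff_exists_eq_tau_pow {x : FreeMonoidZero} :
    x ≠ 0 ↔ ∃ n : ℕ, x = tau ^ n := by
  refine ⟨fun hx => ?_, ?_⟩
  · obtain ⟨m, rfl⟩ := WithZero.ne_zero_iff_exists.mp hx
    exact ⟨m.toAdd, by rw [tau_pow, ofAdd_toAdd]⟩
  · rintro ⟨n, rfl⟩
    rw [tau_pow]
    exact WithZero.coe_ne_zero

end FreeMonoidZero

open FreeMonoidZero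

theorem isTauZeroCon_of_rel_tau_zero {E : Con FreeMonoidZero} (h10 : ¬ E 1 0) (h : E tau 0) :
    IsTauZeroCon E := by
  have rel_zero {x : FreeMonoidZero} (hx : x ≠ 1) : E x 0 := by
    rcases eq_or_ne x 0 with rfl | hx0
    · exact E.refl 0
    obtain ⟨_ | n, rfl⟩ := ne_zero_iff_exists_eq_tau_pow.mp hx0
    · exact absurd (pow_zero tau) hx
    · simpa [pow_succ] using E.mul (E.refl (tau ^ n)) h
  intro x y
  rw [← iff_iff_and_or_not_and_not]
  refine ⟨fun hxy => ⟨?_, ?_⟩, fun hxy => ?_⟩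
  · rintro rfl
    exact not_not.mp fun hy => h10 (E.trans hxy (rel_zero hy))
  · rintro rfl
    exact not_not.mp fun hx => h10 (E.trans (E.symm hxy) (rel_zero hx))
  · by_cases hx : x = 1
    · obtain rfl := hx
      obtain rfl := hxy.mp rfl
      exact E.refl 1
    · exact E.trans (rel_zero hx) (E.symm (rel_zero (hxy.not.mp hx)))

theorem IsTauZeroCon.eq_of_le {E F : Con FreeMonoidZero} (hE : IsTauZeroCon E) (hF : ¬ F 1 0)
    (h : E ≤ F) : F = E := by
  have hF' := isTauZeroCon_of_rel_tau_zero hF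
    (h ((hE tau 0).2 (Or.inr ⟨tau_ne_one, zero_ne_one⟩)))
  exact Con.ext fun x y => (hF' x y).trans (hE x y).symm

theorem isTauNCon_one_iff {E : Con FreeMonoidZero} :
    IsTauNCon 1 E ↔ E = nonzeroCon FreeMonoidZero := by
  simp only [IsTauNCon, Con.ext_iff, nonzeroCon_iff, Nat.cast_one, one_dvd, and_true,
    exists_and_left, exists_and_right, ← ne_zero_iff_exists_eq_tau_pow,
    ← iff_iff_and_or_not_and_not]

theorem IsPrimeCon.le_nonzeroCon_of_not_rel_tau_zero {E : Con FreeMonoidZero}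
    (hE : IsPrimeCon E) (h : ¬ E tau 0) :
    E ≤ nonzeroCon FreeMonoidZero := by
  have rel_zero_iff (x : FreeMonoidZero) : E x 0 ↔ x = 0 := by
    refine ⟨fun hx => by_contra fun hx0 => ?_, fun hx => hx ▸ E.refl 0⟩
    obtain ⟨n, rfl⟩ := ne_zero_iff_exists_eq_tau_pow.mp hx0
    exact h (hE.rel_zero_of_rel_pow_zero hx)
  intro x y hxy
  rw [nonzeroCon_iff, ← rel_zero_iff, ← rel_zero_iff]
  exact ⟨E.trans (E.symm hxy), E.trans hxy⟩

theorem IsPrimeCon.eq_nonzeroCon_of_le {E : Con FreeMonoidZero} (hE : IsPrimeCon E)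
    (h : nonzeroCon FreeMonoidZero ≤ E) : E = nonzeroCon FreeMonoidZero := by
  have h1 : E tau 1 := h (nonzeroCon_iff.2 (iff_of_false tau_ne_zero one_ne_zero))
  have h0 : ¬ E tau 0 := fun h0 => hE.1 (E.trans (E.symm h1) h0)
  exact le_antisymm (hE.le_nonzeroCon_of_not_rel_tau_zero h0) h

/-- The closed points of `spec_c C`, for `C` the free monoid on one generator with zero,
are exactly the congruences `τ ∼ 0` and `τ ∼ 1`. -/
theorem closedPoints_specC_freeMonoidZero (x : SpecC FreeMonoidZero) :
    IsClosed ({x} : Set (SpecC FreeMonoidZero)) ↔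
      (IsTauZeroCon x.1 ∨ IsTauNCon 1 x.1) := by
  rw [SpecC.isClosed_singleton_iff, isTauNCon_one_iff]
  refine ⟨fun hmax => ?_, ?_⟩
  · by_cases h0 : x.1 tau 0
    · exact Or.inl (isTauZeroCon_of_rel_tau_zero x.2.1 h0)
    · have hle := x.2.le_nonzeroCon_of_not_rel_tau_zero h0
      exact Or.inr (congrArg Subtype.val (hmax ⟨_, isPrimeCon_nonzeroCon _⟩ hle)).symm
  · rintro (hx | hx) y hxy <;> apply Subtype.ext
    · exact hx.eq_of_le y.2.1 hxy
    · rw [hx] at hxy ⊢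
      exact y.2.eq_nonzeroCon_of_le hxy
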